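/- Let m, n be positive integers, α, β real with (i,j) ↦ αi + βj injective on the grid {1,…,m} × {1,…,n}, and let V = span{(αx+βy)^k : 0 ≤ k ≤ mn−1}. Define S : V → ℝ^{m×n} by S(P) = (P(i,j))_{i,j}. Then S is a linear bijection, and S is the inverse of the interpolation map T : ℝ^{m×n} → V. -/

import Mathlib

/-!
Put `t(i, j) = α i + β j`. The power `(α x + β y)^k` takes the value `t(i, j)^k` at the grid
point `(i, j)`, so the images of the `mn` spanning powers of `V` are the columns of the
Vandermonde matrix of the `mn` distinct nodes `t(i, j)`. These columns form a basis of
`ℝ^{m×n}`, and a linear map sending a spanning family to a basis is an isomorphism from the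
span onto the target.
-/

open MvPolynomial Function Submodule

theorem linearIndependent_pow_of_injective {K ι : Type*} [CommRing K] [IsDomain K] [Fintype ι]
    {N : ℕ} (hN : Fintype.card ι = N) {t : ι → K} (ht : Injective t) :
    LinearIndependent K fun k : Fin N => fun i => t i ^ (k : ℕ) := by
  rw [Fintype.linearIndependent_iff]
  intro c hc
  let e : Fin N ≃ ι := (Fintype.equivFinOfCardEq hN).symm
  refine congrFun (Matrix.eq_zero_of_forall_index_sum_mul_pow_eq_zero (ht.comp e.injective)
    fun j => ?_)
  simpa using congrFun hc (e j)

theorem LinearMap.bijective_domRestrict_span {R M M' ι : Type*} [Ring R] [AddCommGroup M]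
    [Module R M] [AddCommGroup M'] [Module R M'] {f : M →ₗ[R] M'} {v : ι → M}
    (hli : LinearIndependent R (f ∘ v)) (hspan : span R (Set.range (f ∘ v)) = ⊤) :
    Bijective (f.domRestrict (span R (Set.range v))) :=
  ⟨injective_domRestrict_iff.2 (range_ker_disjoint hli),
    range_eq_top.1 (by rw [range_domRestrict, map_span, ← Set.range_comp, hspan])⟩

theorem MvPolynomial.bijective_pi_aeval_domRestrict_span_pow {K σ ι : Type*} [Field K]
    [Fintype ι] {N : ℕ} (hN : Fintype.card ι = N) {x : ι → σ → K} {p : MvPolynomial σ K}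
    (hp : Injective fun i => eval (x i) p) :
    Bijective ((LinearMap.pi fun i => (aeval (x i)).toLinearMap).domRestrict
      (span K (Set.range fun k : Fin N => p ^ (k : ℕ)))) := by
  have hvalues :
      (LinearMap.pi fun i => (aeval (x i)).toLinearMap) ∘ (fun k : Fin N => p ^ (k : ℕ))
        = fun (k : Fin N) i => eval (x i) p ^ (k : ℕ) := by
    ext k i
    simp
  have hli := linearIndependent_pow_of_injective hN hp
  rw [← hvalues] at hli
  exact LinearMap.bijective_domRestrict_span hli
    (hli.span_eq_top_of_card_eq_finrank' (by simp [hN]))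

theorem stmt_9_general (m n : ℕ) (α β : ℝ)
    (hinj : Function.Injective
      (fun p : Fin m × Fin n => α * ((p.1 : ℕ) + 1) + β * ((p.2 : ℕ) + 1)))
    (V : Submodule ℝ (MvPolynomial (Fin 2) ℝ))
    (hV : V = Submodule.span ℝ
      (Set.range (fun k : Fin (m * n) =>
        (C α * X 0 + C β * X 1 : MvPolynomial (Fin 2) ℝ) ^ (k : ℕ))))
    (S : V → Matrix (Fin m) (Fin n) ℝ)
    (hS : ∀ (P : V) (i : Fin m) (j : Fin n),
      S P i j = eval ![((i : ℕ) + 1 : ℝ), ((j : ℕ) + 1 : ℝ)] (P : MvPolynomial (Fin 2) ℝ)) :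
    IsLinearMap ℝ S ∧ Function.Bijective S ∧
    ∃ T : Matrix (Fin m) (Fin n) ℝ ≃ₗ[ℝ] V,
      (∀ (A : Matrix (Fin m) (Fin n) ℝ) (i : Fin m) (j : Fin n),
        eval ![((i : ℕ) + 1 : ℝ), ((j : ℕ) + 1 : ℝ)] ((T A : MvPolynomial (Fin 2) ℝ)) = A i j) ∧
      (∀ A : Matrix (Fin m) (Fin n) ℝ, S (T A) = A) ∧
      (∀ P : V, T (S P) = P) := by
  subst hV
  let grid : Fin m × Fin n → Fin 2 → ℝ := fun ij => ![(ij.1 : ℕ) + 1, (ij.2 : ℕ) + 1]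
  have hgrid : Injective fun ij => eval (grid ij) (C α * X 0 + C β * X 1) := by
    simpa [grid] using hinj
  have hbij := bijective_pi_aeval_domRestrict_span_pow (N := m * n) (by simp) hgrid
  let E : _ ≃ₗ[ℝ] Matrix (Fin m) (Fin n) ℝ :=
    (LinearEquiv.ofBijective _ hbij).trans (LinearEquiv.curry ℝ ℝ _ _)
  have hE : ∀ P i j, E P i j = eval ![((i : ℕ) + 1 : ℝ), ((j : ℕ) + 1 : ℝ)] (P : _) :=
    fun _ _ _ => rfl
  obtain rfl : S = E := funext fun P => Matrix.ext fun i j => (hS P i j).trans (hE P i j).symm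
  exact ⟨E.toLinearMap.isLinear, E.bijective, E.symm,
    fun A i j => by rw [← hE, E.apply_symm_apply], E.apply_symm_apply, E.symm_apply_apply⟩

/-- the evaluation map S : V → ℝ^{m×n}, S(P) = (P(i,j))_{i,j}, is a linear
bijection and is the inverse of the interpolation map T. -/
theorem stmt_9 (m n : ℕ) (hm : 0 < m) (hn : 0 < n) (α β : ℝ)
    (hinj : Function.Injective
      (fun p : Fin m × Fin n => α * ((p.1 : ℕ) + 1) + β * ((p.2 : ℕ) + 1)))
    (V : Submodule ℝ (MvPolynomial (Fin 2) ℝ))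
    (hV : V = Submodule.span ℝ
      (Set.range (fun k : Fin (m * n) =>
        (C α * X 0 + C β * X 1 : MvPolynomial (Fin 2) ℝ) ^ (k : ℕ))))
    (S : V → Matrix (Fin m) (Fin n) ℝ)
    (hS : ∀ (P : V) (i : Fin m) (j : Fin n),
      S P i j = eval ![((i : ℕ) + 1 : ℝ), ((j : ℕ) + 1 : ℝ)] (P : MvPolynomial (Fin 2) ℝ)) :
    IsLinearMap ℝ S ∧ Function.Bijective S ∧
    ∃ T : Matrix (Fin m) (Fin n) ℝ ≃ₗ[ℝ] V,
      (∀ (A : Matrix (Fin m) (Fin n) ℝ) (i : Fin m) (j : Fin n),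
        eval ![((i : ℕ) + 1 : ℝ), ((j : ℕ) + 1 : ℝ)] ((T A : MvPolynomial (Fin 2) ℝ)) = A i j) ∧
      (∀ A : Matrix (Fin m) (Fin n) ℝ, S (T A) = A) ∧
      (∀ P : V, T (S P) = P) :=
  stmt_9_general m n α β hinj V hV S hS
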